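/- Let A and B be disjoint nonempty subsets of the real Banach space X such that A links B. Assume B is a cone (tu ∈ B whenever u ∈ B and t ≥ 0), let e ∈ X \ B with −e ∉ B, and let Q = {u + se : u ∈ B, s ≥ 0}. Then h(Q) ∩ A ≠ ∅ for every h ∈ H̃, where H̃ = {h ∈ H : h restricted to B is the identity}. -/

import Mathlib

/-
Conjugate the straight-line contraction of `X` onto `-e` by `h`, giving the deformation
`Γ(t) u = h ((1 - t) h⁻¹ u - t e)` in `Φ`. Since `A` links `B`, some `Γ(t) u` with `u ∈ A`, `t ∈ (0, 1]`
lies in `B`, and as `h` fixes `B` pointwise so does `w = (1 - t) h⁻¹ u - t e`. Because `-e ∉ B` we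
have `t < 1`, and then `h⁻¹ u = (1 - t)⁻¹ w + t (1 - t)⁻¹ e ∈ Q` by the cone property, so `u ∈ h(Q) ∩ A`.
-/

set_option autoImplicit false

open Filter Topology Bornology Set

/-- The class `Φ` of deformations of Schechter. -/
structure LinkingDeformation (X : Type*) [NormedAddCommGroup X] [NormedSpace ℝ X] where
  toFun : ℝ → X → X
  invFun : ℝ → X → X
  cont : ContinuousOn (fun p : ℝ × X => toFun p.1 p.2) (Set.Icc (0 : ℝ) 1 ×ˢ Set.univ)
  init : ∀ u : X, toFun 0 u = u
  left_inv : ∀ t ∈ Set.Ico (0 : ℝ) 1, Function.LeftInverse (invFun t) (toFun t)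
  right_inv : ∀ t ∈ Set.Ico (0 : ℝ) 1, Function.RightInverse (invFun t) (toFun t)
  inv_cont : ContinuousOn (fun p : ℝ × X => invFun p.1 p.2) (Set.Ico (0 : ℝ) 1 ×ˢ Set.univ)
  endpoint : ∃ q : X, (∀ u : X, toFun 1 u = q) ∧
    ∀ A : Set X, IsBounded A → ∀ ε > (0 : ℝ), ∃ δ > (0 : ℝ),
      ∀ t ∈ Set.Ico (1 - δ) (1 : ℝ), ∀ u ∈ A, ‖toFun t u - q‖ < ε
  bound : ∀ A : Set X, IsBounded A → ∀ t₀ ∈ Set.Ico (0 : ℝ) 1,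
    ∃ C : ℝ, ∀ u ∈ A, ∀ t ∈ Set.Icc (0 : ℝ) t₀, ‖toFun t u‖ + ‖invFun t u‖ ≤ C

/-- `A` links `B` in the sense of Schechter. -/
def Links {X : Type*} [NormedAddCommGroup X] [NormedSpace ℝ X] (A B : Set X) : Prop :=
  ∀ Γ : LinkingDeformation X, ∃ u ∈ A, ∃ t ∈ Set.Ioc (0 : ℝ) 1, Γ.toFun t u ∈ B

section

variable {X : Type*} [NormedAddCommGroup X] [NormedSpace ℝ X]

lemma one_sub_ne_zero_of_mem_Ico {t : ℝ} (ht : t ∈ Ico (0 : ℝ) 1) : 1 - t ≠ 0 :=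
  sub_ne_zero.mpr ht.2.ne'

lemma norm_smul_le_of_mem_Icc (u : X) {t : ℝ} (ht : t ∈ Icc (0 : ℝ) 1) : ‖t • u‖ ≤ ‖u‖ := by
  rw [norm_smul, Real.norm_of_nonneg ht.1]
  exact mul_le_of_le_one_left (norm_nonneg u) ht.2

lemma norm_one_sub_smul_add_smul_le (u p : X) {t : ℝ} (ht : t ∈ Icc (0 : ℝ) 1) :
    ‖(1 - t) • u + t • p‖ ≤ ‖u‖ + ‖p‖ :=
  (norm_add_le _ _).trans <| add_le_add
    (norm_smul_le_of_mem_Icc u ⟨sub_nonneg.mpr ht.2, by linarith [ht.1]⟩)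
    (norm_smul_le_of_mem_Icc p ht)

end

namespace LinkingDeformation

variable {X : Type*} [NormedAddCommGroup X] [NormedSpace ℝ X]

noncomputable def lineTo (p : X) : LinkingDeformation X where
  toFun t u := (1 - t) • u + t • p
  invFun t u := (1 - t)⁻¹ • (u - t • p)
  cont := by fun_prop
  init u := by simp
  left_inv t ht u := by
    simp only [add_sub_cancel_right, smul_smul, inv_mul_cancel₀ (one_sub_ne_zero_of_mem_Ico ht),
      one_smul]
  right_inv t ht u := by
    simp only [smul_smul, mul_inv_cancel₀ (one_sub_ne_zero_of_mem_Ico ht), one_smul,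
      sub_add_cancel]
  inv_cont := by
    refine ContinuousOn.smul (ContinuousOn.inv₀ (by fun_prop) ?_) (by fun_prop)
    exact fun q hq => one_sub_ne_zero_of_mem_Ico hq.1
  endpoint := by
    refine ⟨p, fun u => by simp, fun A hA ε hε => ?_⟩
    obtain ⟨R, hR, hAR⟩ := hA.exists_pos_norm_le
    have hRp : 0 < R + ‖p‖ := by positivity
    refine ⟨ε / (2 * (R + ‖p‖)), by positivity, fun t ht u hu => ?_⟩
    have h1t : 1 - t ≤ ε / (2 * (R + ‖p‖)) := by linarith [ht.1]
    calc ‖(1 - t) • u + t • p - p‖ = (1 - t) * ‖u - p‖ := by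
          rw [show (1 - t) • u + t • p - p = (1 - t) • (u - p) by module, norm_smul,
            Real.norm_of_nonneg (by linarith [ht.2])]
      _ ≤ ε / (2 * (R + ‖p‖)) * (R + ‖p‖) := by
          gcongr
          exact (norm_sub_le u p).trans (by gcongr; exact hAR u hu)
      _ < ε := by field_simp; linarith
  bound := by
    intro A hA t₀ ht₀
    obtain ⟨R, hR, hAR⟩ := hA.exists_pos_norm_le
    have h1t₀ : 0 < 1 - t₀ := by linarith [ht₀.2]
    refine ⟨(R + ‖p‖) + (1 - t₀)⁻¹ * (R + ‖p‖), fun u hu t ht => ?_⟩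
    have ht₁ : t ∈ Icc (0 : ℝ) 1 := ⟨ht.1, ht.2.trans ht₀.2.le⟩
    have hinv : ‖(1 - t)⁻¹ • (u - t • p)‖ ≤ (1 - t₀)⁻¹ * (R + ‖p‖) := by
      rw [norm_smul, Real.norm_of_nonneg (inv_nonneg.mpr (by linarith [ht.2]))]
      gcongr
      · linarith [ht.2]
      · exact (norm_sub_le _ _).trans (add_le_add (hAR u hu) (norm_smul_le_of_mem_Icc p ht₁))
    exact add_le_add ((norm_one_sub_smul_add_smul_le u p ht₁).trans (by gcongr; exact hAR u hu)) hinv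

noncomputable def conj (Γ : LinkingDeformation X) (h : X ≃ₜ X)
    (hb : ∀ s : Set X, IsBounded s → IsBounded (h '' s))
    (hb' : ∀ s : Set X, IsBounded s → IsBounded (h.symm '' s)) : LinkingDeformation X where
  toFun t u := h (Γ.toFun t (h.symm u))
  invFun t u := h (Γ.invFun t (h.symm u))
  cont := h.continuous.comp_continuousOn <| Γ.cont.comp
    (continuous_fst.prodMk (h.symm.continuous.comp continuous_snd)).continuousOn
    fun q hq => ⟨hq.1, mem_univ _⟩
  init u := by simp [Γ.init]
  left_inv t ht u := by simp [Γ.left_inv t ht (h.symm u)]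
  right_inv t ht u := by simp [Γ.right_inv t ht (h.symm u)]
  inv_cont := h.continuous.comp_continuousOn <| Γ.inv_cont.comp
    (continuous_fst.prodMk (h.symm.continuous.comp continuous_snd)).continuousOn
    fun q hq => ⟨hq.1, mem_univ _⟩
  endpoint := by
    obtain ⟨q, hq, hconv⟩ := Γ.endpoint
    refine ⟨h q, fun u => by simp [hq], fun A hA ε hε => ?_⟩
    obtain ⟨η, hη, hball⟩ := Metric.continuousAt_iff.mp h.continuous.continuousAt ε hε
    obtain ⟨δ, hδ, hδA⟩ := hconv _ (hb' A hA) η hη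
    refine ⟨δ, hδ, fun t ht u hu => ?_⟩
    rw [← dist_eq_norm]
    exact hball (by rw [dist_eq_norm]; exact hδA t ht _ (mem_image_of_mem _ hu))
  bound := by
    intro A hA t₀ ht₀
    obtain ⟨C, hC⟩ := Γ.bound _ (hb' A hA) t₀ ht₀
    obtain ⟨C', hC'⟩ := (hb _ (Metric.isBounded_closedBall (x := (0 : X)) (r := C))).exists_norm_le
    have hmem : ∀ x : X, ‖x‖ ≤ C → ‖h x‖ ≤ C' := fun x hx =>
      hC' _ (mem_image_of_mem _ (mem_closedBall_zero_iff.mpr hx))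
    refine ⟨C' + C', fun u hu t ht => add_le_add (hmem _ ?_) (hmem _ ?_)⟩
    · linarith [hC _ (mem_image_of_mem _ hu) t ht, norm_nonneg (Γ.invFun t (h.symm u))]
    · linarith [hC _ (mem_image_of_mem _ hu) t ht, norm_nonneg (Γ.toFun t (h.symm u))]

end LinkingDeformation

lemma exists_add_nonneg_smul_of_one_sub_smul_sub_smul_mem {X : Type*} [AddCommGroup X]
    [Module ℝ X] {B : Set X} (hcone : ∀ u ∈ B, ∀ t : ℝ, 0 ≤ t → t • u ∈ B) {e v : X}
    (he' : -e ∉ B) {t : ℝ} (ht : t ∈ Ioc (0 : ℝ) 1) (hw : (1 - t) • v - t • e ∈ B) :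
    ∃ u ∈ B, ∃ s : ℝ, 0 ≤ s ∧ v = u + s • e := by
  have ht₁ : t < 1 := by
    refine ht.2.lt_of_ne fun h₁ => he' ?_
    simpa [h₁] using hw
  have h1t : 0 < 1 - t := sub_pos.mpr ht₁
  refine ⟨(1 - t)⁻¹ • ((1 - t) • v - t • e), hcone _ hw _ (inv_nonneg.mpr h1t.le),
    (1 - t)⁻¹ * t, mul_nonneg (inv_nonneg.mpr h1t.le) ht.1.le, ?_⟩
  rw [smul_sub, smul_smul, smul_smul, inv_mul_cancel₀ h1t.ne', one_smul, sub_add_cancel]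

theorem stmt_5_general
    {X : Type*} [NormedAddCommGroup X] [NormedSpace ℝ X]
    (A B : Set X) (hlinks : Links A B)
    (hcone : ∀ u ∈ B, ∀ t : ℝ, 0 ≤ t → t • u ∈ B)
    (e : X) (he' : -e ∉ B)
    (Q : Set X) (hQ : Q = {x : X | ∃ u ∈ B, ∃ s : ℝ, 0 ≤ s ∧ x = u + s • e}) :
    ∀ h : X ≃ₜ X,
      (∀ s : Set X, IsBounded s → IsBounded (h '' s)) →
      (∀ s : Set X, IsBounded s → IsBounded (h.symm '' s)) →
      (∀ u ∈ B, h u = u) →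
      ∃ u ∈ Q, h u ∈ A := by
  intro h hb hb' hfix
  obtain ⟨u, hu, t, ht, hΓ⟩ := hlinks ((LinkingDeformation.lineTo (-e)).conj h hb hb')
  change h ((1 - t) • h.symm u + t • -e) ∈ B at hΓ
  have hw : (1 - t) • h.symm u - t • e ∈ B := by
    rw [sub_eq_add_neg, ← smul_neg, ← h.injective (hfix _ hΓ)]
    exact hΓ
  refine ⟨h.symm u, hQ ▸ ?_, by simpa using hu⟩
  exact exists_add_nonneg_smul_of_one_sub_smul_sub_smul_mem hcone he' ht hw

/-- **Lemma 3 (intersection lemma).**  If `A` and `B` are disjoint nonempty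
subsets with `A` linking `B`, `B` a cone, `e ∈ X \ B` with `-e ∉ B`, and
`Q = {u + s e : u ∈ B, s ≥ 0}`, then `h(Q) ∩ A ≠ ∅` for every `h ∈ H̃`,
where `H̃` is the class of homeomorphisms of `X` mapping bounded sets to
bounded sets in both directions and restricting to the identity on `B`. -/
theorem stmt_5
    {X : Type*} [NormedAddCommGroup X] [NormedSpace ℝ X] [CompleteSpace X]
    (A B : Set X) (hAne : A.Nonempty) (hBne : B.Nonempty)
    (hdisj : Disjoint A B) (hlinks : Links A B)
    (hcone : ∀ u ∈ B, ∀ t : ℝ, 0 ≤ t → t • u ∈ B)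
    (e : X) (he : e ∉ B) (he' : -e ∉ B)
    (Q : Set X) (hQ : Q = {x : X | ∃ u ∈ B, ∃ s : ℝ, 0 ≤ s ∧ x = u + s • e}) :
    ∀ h : X ≃ₜ X,
      (∀ s : Set X, IsBounded s → IsBounded (h '' s)) →
      (∀ s : Set X, IsBounded s → IsBounded (h.symm '' s)) →
      (∀ u ∈ B, h u = u) →
      ∃ u ∈ Q, h u ∈ A :=
  stmt_5_general A B hlinks hcone e he' Q hQ
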